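/- Let f(x) = W_n σ(W_{n−1} σ(··· σ(W_1 x) ···)) be a feed-forward neural network with n layers, W_l ∈ ℝ^{m_l × m_{l−1}} with m_l ≥ 3 for all l, activation σ L-Lipschitz with σ(0) = 0 componentwise (no activation after the last layer, no biases), and σ_i = ‖W_i‖. Suppose the quantized matrices Q_j satisfy ‖W_j − Q_j‖ ≤ ((8π + √3)/(6√3)) δ_j m_j √(m_j m_{j−1}) N_j^{−1} for all j (as holds when each layer is quantized by first-order ΣΔ with step size δ_j against a harmonic frame H^{m_j}_{N_j} with the identity permutation). Then for every input X ∈ ℝ^{m_0}, ‖f(X) − f_Q(X)‖ ≤ L^{n−1} ‖X‖ · Σ_{j=1}^{n} [ ((8π + √3)/(6√3)) δ_j m_j √(m_j m_{j−1}) N_j^{−1} · ∏_{i=j+1}^{n} σ_i · ∏_{l=1}^{j−1} ( ((8π + √3)/(6√3)) δ_l m_l √(m_l m_{l−1}) N_l^{−1} + σ_l ) ]. -/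

import Mathlib

open scoped RealInnerProductSpace BigOperators

/-- The matrix 2-norm (operator norm w.r.t. Euclidean norms), i.e. the largest
singular value. -/
noncomputable def opNorm {m n : ℕ} (A : Matrix (Fin m) (Fin n) ℝ) : ℝ :=
  ‖LinearMap.toContinuousLinearMap (Matrix.toEuclideanLin A)‖

/-- The `j`-th column of a matrix, viewed as a vector of `ℝ^m` with the Euclidean norm. -/
noncomputable def matCol {m n : ℕ} (A : Matrix (Fin m) (Fin n) ℝ) (j : Fin n) :
    EuclideanSpace ℝ (Fin m) :=
  WithLp.toLp 2 (fun i => A i j)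

/-- Frame variation `σ(F,p)` of the ordered family `v = e ∘ p`:
`∑_{i=1}^{N-1} ‖v i - v (i+1)‖`. -/
noncomputable def frameVar {E : Type*} [NormedAddCommGroup E] :
    {N : ℕ} → (Fin N → E) → ℝ
  | 0, _ => 0
  | n + 1, v => ∑ i : Fin n, ‖v i.castSucc - v i.succ‖

/-- The midrise quantization alphabet `A^δ_K`. -/
def midrise (δ : ℝ) (K : ℕ) : Set ℝ :=
  {a | ∃ j : Fin (2 * K), a = (-(K : ℝ) + 1 / 2 + (j : ℕ)) * δ}

/-- Componentwise application of a scalar function to a Euclidean vector. -/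
noncomputable def cwMap (σ : ℝ → ℝ) {d : ℕ} (v : EuclideanSpace ℝ (Fin d)) :
    EuclideanSpace ℝ (Fin d) :=
  WithLp.toLp 2 (fun j => σ (v j))

/-- `layerSeq σ m W X i` is the activated output after `i` layers:
`z_0 = X`, `z_{i+1} = σ.(W_i z_i)`. -/
noncomputable def layerSeq (σ : ℝ → ℝ) (m : ℕ → ℕ)
    (W : (i : ℕ) → Matrix (Fin (m (i + 1))) (Fin (m i)) ℝ)
    (X : EuclideanSpace ℝ (Fin (m 0))) : (i : ℕ) → EuclideanSpace ℝ (Fin (m i))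
  | 0 => X
  | i + 1 => cwMap σ (Matrix.toEuclideanLin (W i) (layerSeq σ m W X i))

/-- The `n`-layer feed-forward network `W_n σ(W_{n-1} σ(⋯ σ(W_1 X)⋯))`
(no activation after the last layer, no biases). -/
noncomputable def net (σ : ℝ → ℝ) (m : ℕ → ℕ)
    (W : (i : ℕ) → Matrix (Fin (m (i + 1))) (Fin (m i)) ℝ)
    (n : ℕ) (X : EuclideanSpace ℝ (Fin (m 0))) : EuclideanSpace ℝ (Fin (m n)) :=
  match n with
  | 0 => X
  | k + 1 => Matrix.toEuclideanLin (W k) (layerSeq σ m W X k)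

/-- Componentwise ReLU. -/
noncomputable def relu {d : ℕ} (v : EuclideanSpace ℝ (Fin d)) : EuclideanSpace ℝ (Fin d) :=
  cwMap (fun t => max 0 t) v

/-- A residual block `z(x) = W₂ σ(W₁ x) + x` with ReLU activation `σ`. -/
noncomputable def resBlock {k : ℕ} (W1 W2 : Matrix (Fin k) (Fin k) ℝ)
    (x : EuclideanSpace ℝ (Fin k)) : EuclideanSpace ℝ (Fin k) :=
  Matrix.toEuclideanLin W2 (relu (Matrix.toEuclideanLin W1 x)) + x

/-- Partial compositions of a residual network:
`y_0 = X`, `y_i = z^{[i]} ∘ σ ∘ ⋯ ∘ σ ∘ z^{[1]} (X)`, where block `i` (1-based)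
uses matrices `W1 (i-1)`, `W2 (i-1)`. -/
noncomputable def resPartial {k : ℕ} (W1 W2 : ℕ → Matrix (Fin k) (Fin k) ℝ)
    (X : EuclideanSpace ℝ (Fin k)) : ℕ → EuclideanSpace ℝ (Fin k)
  | 0 => X
  | 1 => resBlock (W1 0) (W2 0) X
  | i + 2 => resBlock (W1 (i + 1)) (W2 (i + 1)) (relu (resPartial W1 W2 X (i + 1)))



private lemma opNorm_apply {a b : ℕ} (A : Matrix (Fin a) (Fin b) ℝ)
    (v : EuclideanSpace ℝ (Fin b)) :
    ‖Matrix.toEuclideanLin A v‖ ≤ opNorm A * ‖v‖ := by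
  have h := (LinearMap.toContinuousLinearMap (Matrix.toEuclideanLin A)).le_opNorm v
  simpa [opNorm] using h

private lemma opNorm_nonneg' {a b : ℕ} (A : Matrix (Fin a) (Fin b) ℝ) : 0 ≤ opNorm A :=
  norm_nonneg _

private lemma opNorm_le_sub {a b : ℕ} (A B : Matrix (Fin a) (Fin b) ℝ) :
    opNorm B ≤ opNorm (A - B) + opNorm A := by
  unfold opNorm
  rw [map_sub, map_sub]
  have h := norm_sub_norm_le (LinearMap.toContinuousLinearMap (Matrix.toEuclideanLin B))
    (LinearMap.toContinuousLinearMap (Matrix.toEuclideanLin A))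
  rw [norm_sub_rev] at h
  linarith

private lemma cw_lip {L : ℝ} (hL : 0 ≤ L) {σ : ℝ → ℝ}
    (hσ : ∀ a b : ℝ, |σ a - σ b| ≤ L * |a - b|) {d : ℕ}
    (v w : EuclideanSpace ℝ (Fin d)) :
    ‖cwMap σ v - cwMap σ w‖ ≤ L * ‖v - w‖ := by
  rw [EuclideanSpace.norm_eq, EuclideanSpace.norm_eq,
    ← Real.sqrt_sq hL, ← Real.sqrt_mul (by positivity)]
  apply Real.sqrt_le_sqrt
  rw [Finset.mul_sum]
  apply Finset.sum_le_sum
  intro i _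
  have h : ‖(cwMap σ v - cwMap σ w) i‖ = |σ (v i) - σ (w i)| := by
    simp [cwMap, Real.norm_eq_abs]
  have h2 : ‖(v - w) i‖ = |v i - w i| := by simp [Real.norm_eq_abs]
  rw [h, h2]
  have := hσ (v i) (w i)
  nlinarith [abs_nonneg (σ (v i) - σ (w i)), abs_nonneg (v i - w i)]

private lemma cw_zero {σ : ℝ → ℝ} (hσ0 : σ 0 = 0) {d : ℕ} :
    cwMap σ (0 : EuclideanSpace ℝ (Fin d)) = 0 := by
  ext i; simp [cwMap, hσ0]

private lemma cw_norm {L : ℝ} (hL : 0 ≤ L) {σ : ℝ → ℝ}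
    (hσ : ∀ a b : ℝ, |σ a - σ b| ≤ L * |a - b|) (hσ0 : σ 0 = 0) {d : ℕ}
    (v : EuclideanSpace ℝ (Fin d)) : ‖cwMap σ v‖ ≤ L * ‖v‖ := by
  have := cw_lip hL hσ v 0
  simpa [cw_zero hσ0] using this

set_option maxHeartbeats 1000000 in
private lemma main_bound (L : ℝ) (hL : 0 ≤ L) (σ : ℝ → ℝ)
    (hσ : ∀ a b : ℝ, |σ a - σ b| ≤ L * |a - b|) (hσ0 : σ 0 = 0)
    (n : ℕ) (m : ℕ → ℕ)
    (W Q : (i : ℕ) → Matrix (Fin (m (i + 1))) (Fin (m i)) ℝ)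
    (ε : ℕ → ℝ) (hQ : ∀ j ≤ n, opNorm (W j - Q j) ≤ ε j)
    (X : EuclideanSpace ℝ (Fin (m 0))) :
    ‖net σ m W (n + 1) X - net σ m Q (n + 1) X‖ ≤
      L ^ n * ‖X‖ * ∑ j ∈ Finset.range (n + 1),
        ε j * (∏ i ∈ Finset.Ico (j + 1) (n + 1), opNorm (W i)) *
          (∏ l ∈ Finset.range j, (ε l + opNorm (W l))) := by
  set z : (i : ℕ) → EuclideanSpace ℝ (Fin (m i)) := layerSeq σ m W X with hz
  set z' : (i : ℕ) → EuclideanSpace ℝ (Fin (m i)) := layerSeq σ m Q X with hz'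
  set η : ℕ → ℝ := fun j => opNorm (W j) with hη
  set S : ℕ → ℝ := fun k => ∑ j ∈ Finset.range k,
      ε j * (∏ i ∈ Finset.Ico (j + 1) k, η i) *
        (∏ l ∈ Finset.range j, (ε l + η l)) with hSdef
  have hεnn : ∀ j ≤ n, 0 ≤ ε j := fun j hj => le_trans (opNorm_nonneg' _) (hQ j hj)
  have hηnn : ∀ j, 0 ≤ η j := fun j => opNorm_nonneg' _
  have hQnorm : ∀ j ≤ n, opNorm (Q j) ≤ ε j + η j := fun j hj =>
    le_trans (opNorm_le_sub (W j) (Q j)) (add_le_add_left (hQ j hj) _)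
  have hA : ∀ k ≤ n, ‖z' k‖ ≤ L ^ k * (∏ l ∈ Finset.range k, (ε l + η l)) * ‖X‖ := by
    intro k
    induction k with
    | zero => intro _; simp [hz', layerSeq]
    | succ k ih =>
      intro hk
      have hk' : k ≤ n := Nat.le_of_succ_le hk
      have ih' := ih hk'
      have h1 : ‖z' (k + 1)‖ ≤ L * ‖Matrix.toEuclideanLin (Q k) (z' k)‖ :=
        cw_norm hL hσ hσ0 _
      have h2 : ‖Matrix.toEuclideanLin (Q k) (z' k)‖ ≤ (ε k + η k) * ‖z' k‖ :=
        le_trans (opNorm_apply _ _)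
          (mul_le_mul_of_nonneg_right (hQnorm k hk') (norm_nonneg _))
      have hek : 0 ≤ ε k + η k := add_nonneg (hεnn k hk') (hηnn k)
      calc ‖z' (k + 1)‖ ≤ L * ((ε k + η k) * ‖z' k‖) :=
            le_trans h1 (mul_le_mul_of_nonneg_left h2 hL)
        _ ≤ L * ((ε k + η k) * (L ^ k * (∏ l ∈ Finset.range k, (ε l + η l)) * ‖X‖)) := by
            apply mul_le_mul_of_nonneg_left _ hL
            exact mul_le_mul_of_nonneg_left ih' hek
        _ = L ^ (k + 1) * (∏ l ∈ Finset.range (k + 1), (ε l + η l)) * ‖X‖ := by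
            rw [Finset.prod_range_succ]; ring
  have key : ∀ k ≤ n,
      ‖Matrix.toEuclideanLin (W k) (z k) - Matrix.toEuclideanLin (Q k) (z' k)‖ ≤
        η k * ‖z k - z' k‖ + ε k * ‖z' k‖ := by
    intro k hk
    have hdec : Matrix.toEuclideanLin (W k) (z k) - Matrix.toEuclideanLin (Q k) (z' k) =
        Matrix.toEuclideanLin (W k) (z k - z' k) +
          Matrix.toEuclideanLin (W k - Q k) (z' k) := by
      rw [map_sub, map_sub, LinearMap.sub_apply]
      abel
    rw [hdec]
    refine le_trans (norm_add_le _ _) (add_le_add ?_ ?_)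
    · exact opNorm_apply _ _
    · exact le_trans (opNorm_apply _ _)
        (mul_le_mul_of_nonneg_right (hQ k hk) (norm_nonneg _))
  have hS : ∀ k, S (k + 1) = η k * S k + ε k * ∏ l ∈ Finset.range k, (ε l + η l) := by
    intro k
    simp only [hSdef]
    rw [Finset.sum_range_succ, Finset.Ico_self, Finset.prod_empty, mul_one, Finset.mul_sum]
    congr 1
    apply Finset.sum_congr rfl
    intro j hj
    rw [Finset.prod_Ico_succ_top (Nat.succ_le_of_lt (Finset.mem_range.mp hj))]
    ring
  have hB : ∀ k ≤ n, ‖z k - z' k‖ ≤ L ^ k * ‖X‖ * S k := by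
    intro k
    induction k with
    | zero => intro _; simp [hz, hz', layerSeq, hSdef]
    | succ k ih =>
      intro hk
      have hk' : k ≤ n := Nat.le_of_succ_le hk
      have h1 : ‖z (k + 1) - z' (k + 1)‖ ≤
          L * ‖Matrix.toEuclideanLin (W k) (z k) - Matrix.toEuclideanLin (Q k) (z' k)‖ :=
        cw_lip hL hσ _ _
      calc ‖z (k + 1) - z' (k + 1)‖
          ≤ L * (η k * ‖z k - z' k‖ + ε k * ‖z' k‖) :=
            le_trans h1 (mul_le_mul_of_nonneg_left (key k hk') hL)
        _ ≤ L * (η k * (L ^ k * ‖X‖ * S k) +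
              ε k * (L ^ k * (∏ l ∈ Finset.range k, (ε l + η l)) * ‖X‖)) := by
            apply mul_le_mul_of_nonneg_left _ hL
            exact add_le_add (mul_le_mul_of_nonneg_left (ih hk') (hηnn k))
              (mul_le_mul_of_nonneg_left (hA k hk') (hεnn k hk'))
        _ = L ^ (k + 1) * ‖X‖ * (η k * S k + ε k * ∏ l ∈ Finset.range k, (ε l + η l)) := by
            ring
        _ = L ^ (k + 1) * ‖X‖ * S (k + 1) := by rw [hS k]
  have hfin : net σ m W (n + 1) X - net σ m Q (n + 1) X =
      Matrix.toEuclideanLin (W n) (z n) - Matrix.toEuclideanLin (Q n) (z' n) := rfl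
  rw [hfin]
  calc ‖Matrix.toEuclideanLin (W n) (z n) - Matrix.toEuclideanLin (Q n) (z' n)‖
      ≤ η n * ‖z n - z' n‖ + ε n * ‖z' n‖ := key n le_rfl
    _ ≤ η n * (L ^ n * ‖X‖ * S n) +
        ε n * (L ^ n * (∏ l ∈ Finset.range n, (ε l + η l)) * ‖X‖) :=
        add_le_add (mul_le_mul_of_nonneg_left (hB n le_rfl) (hηnn n))
          (mul_le_mul_of_nonneg_left (hA n le_rfl) (hεnn n le_rfl))
    _ = L ^ n * ‖X‖ * (η n * S n + ε n * ∏ l ∈ Finset.range n, (ε l + η l)) := by ring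
    _ = L ^ n * ‖X‖ * S (n + 1) := by rw [hS n]

/-- (error bound for feed-forward networks quantized with
harmonic frames; the network has `n+1` layers indexed `0, …, n`, layer `j`
mapping `ℝ^{m j} → ℝ^{m (j+1)}`, so the paper's `m_j` is `m (j+1)`, `m_{j-1}` is
`m j`, and `L^{n-1}` is `L^n`). -/
theorem stmt11 (L : ℝ) (σ : ℝ → ℝ)
    (hσ : ∀ a b : ℝ, |σ a - σ b| ≤ L * |a - b|) (hσ0 : σ 0 = 0)
    (n : ℕ) (m : ℕ → ℕ) (hm : ∀ i, 3 ≤ m i)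
    (W Q : (i : ℕ) → Matrix (Fin (m (i + 1))) (Fin (m i)) ℝ)
    (δ : ℕ → ℝ) (hδ : ∀ j, 0 < δ j) (N : ℕ → ℕ) (hN : ∀ j, 0 < N j)
    (hQ : ∀ j ≤ n, opNorm (W j - Q j) ≤
      (8 * Real.pi + Real.sqrt 3) / (6 * Real.sqrt 3) * δ j * (m (j + 1)) *
        Real.sqrt ((m (j + 1) : ℝ) * m j) / N j)
    (X : EuclideanSpace ℝ (Fin (m 0))) :
    ‖net σ m W (n + 1) X - net σ m Q (n + 1) X‖ ≤
      L ^ n * ‖X‖ * ∑ j ∈ Finset.range (n + 1),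
        ((8 * Real.pi + Real.sqrt 3) / (6 * Real.sqrt 3) * δ j * (m (j + 1)) *
            Real.sqrt ((m (j + 1) : ℝ) * m j) / N j) *
          (∏ i ∈ Finset.Ico (j + 1) (n + 1), opNorm (W i)) *
          (∏ l ∈ Finset.range j,
            ((8 * Real.pi + Real.sqrt 3) / (6 * Real.sqrt 3) * δ l * (m (l + 1)) *
                Real.sqrt ((m (l + 1) : ℝ) * m l) / N l + opNorm (W l))) := by
  
  have hL : 0 ≤ L := le_trans (abs_nonneg _) (by simpa using hσ 1 0)
  exact main_bound L hL σ hσ hσ0 n m W Q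
    (fun j => (8 * Real.pi + Real.sqrt 3) / (6 * Real.sqrt 3) * δ j * (m (j + 1)) *
      Real.sqrt ((m (j + 1) : ℝ) * m j) / N j) hQ X
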